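/- Assume χ = C_N. Then solutions of the gradient flow of F^N_m do not blow up in finite time: for every solution X : [0,T) → ℝ^N of the gradient flow with T < ∞, there exists ε > 0 such that X_{i+1}(t) − X_i(t) ≥ ε for all t ∈ [0,T) and all 1 ≤ i ≤ N−1 (so the maximal solution issued from any X_0 ∈ R^N is defined on all of [0,∞)). -/

import Mathlib

open scoped BigOperators
noncomputable section

/-- Internal (diffusion) part: sum of (X_{i+1} - X_i)^(1-m) over consecutive gaps. -/
def gapSum (m : ℝ) (p : ℕ) (X : EuclideanSpace ℝ (Fin p)) : ℝ :=
  ∑ i : Fin p, if h : (i : ℕ) + 1 < p then (X ⟨(i : ℕ) + 1, h⟩ - X i) ^ (1 - m) else 0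

/-- Interaction part: sum of |X_i - X_j|^(1-m) over ordered pairs i ≠ j. -/
def pairSum (m : ℝ) (p : ℕ) (X : EuclideanSpace ℝ (Fin p)) : ℝ :=
  ∑ i : Fin p, ∑ j : Fin p, if i ≠ j then |X i - X j| ^ (1 - m) else 0

/-- The discrete free energy F^p_m. -/
def FF (m χ : ℝ) (p : ℕ) (X : EuclideanSpace ℝ (Fin p)) : ℝ :=
  (m - 1)⁻¹ * gapSum m p X - (χ / (m - 1)) * pairSum m p X

/-- Membership in R^p: strictly increasing with zero mean. -/
def memR (p : ℕ) (X : EuclideanSpace ℝ (Fin p)) : Prop :=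
  (StrictMono fun i => X i) ∧ ∑ i, X i = 0

/-- The critical constant C_p, with 1/C_p the sup of the HLS ratio. -/
def Cp (m : ℝ) (p : ℕ) : ℝ :=
  (sSup {r : ℝ | ∃ X : EuclideanSpace ℝ (Fin p), memR p X ∧
    r = pairSum m p X / gapSum m p X})⁻¹

/-- The functional F^p_{m,α} with confining quadratic potential. -/
def FFa (m χ α : ℝ) (p : ℕ) (X : EuclideanSpace ℝ (Fin p)) : ℝ :=
  FF m χ p X + α / 2 * ‖X‖ ^ 2

/-- H^N_{m+1}(Y) = |∇F^N_m(Y)|² − ((m−1) F^N_m(Y))². -/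
def Hfun (m χ : ℝ) (N : ℕ) (Y : EuclideanSpace ℝ (Fin N)) : ℝ :=
  ‖gradient (FF m χ N) Y‖ ^ 2 - ((m - 1) * FF m χ N Y) ^ 2

/-- X : [0,T) → R^N is a solution of the gradient flow of F^N_m. -/
def isGFlow (m χ : ℝ) (N : ℕ) (T : ℝ) (X : ℝ → EuclideanSpace ℝ (Fin N)) : Prop :=
  ∀ t ∈ Set.Ico (0 : ℝ) T, memR N (X t) ∧
    HasDerivWithinAt X (-(gradient (FF m χ N) (X t))) (Set.Ico (0 : ℝ) T) t

/-- The gap Y_{i+1} - Y_i (0 if i+1 is out of range). -/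
def gapAt (N : ℕ) (Y : EuclideanSpace ℝ (Fin N)) (i : ℕ) : ℝ :=
  if h : i + 1 < N then Y ⟨i + 1, h⟩ - Y ⟨i, Nat.lt_of_succ_lt h⟩ else 0

/-!
Let `σ p` be the supremum of `pairSum / gapSum` over `R^p`, so that `C_p = (σ p)⁻¹`. The key
fact is `σ (N - 1) < σ N`. It follows by induction from two observations: if
`σ (p - 1) < σ p` then `σ p` is attained, because a normalised maximising sequence can only
degenerate through a collision, and cutting the limit configuration at a jump bounds the ratio
asymptotically by `σ (p - 1)`; and appending a far-away point to a maximiser of level `p` gives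
a ratio strictly above `σ p`, because `σ p ≤ 2 (p - 1)` while the new point brings about `2 p`
times its gap term.

Along the flow `F` decreases, and `F ≥ 0` at `χ = C_N`. By Euler's identity for the
`(1 - m)`-homogeneous `F`, `d/dt |X|² = 2 (m - 1) F ∈ [0, 2 (m - 1) F(X 0)]`, so `|X t|` stays
in a compact shell `[|X 0|, R_T]`. On such a shell the sublevel set `{F ≤ F(X 0)}` stays away
from collisions: cutting at a jump of a limit configuration as above gives
`(m - 1) F ≥ (1 - χ σ (N - 1)) gapSum - O(1)`, while `gapSum → ∞` at a collision.
-/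

open Finset Filter Topology

section Sequences

variable {m : ℝ} {L : ℕ} {z w : ℕ → ℝ}

def seqGapSum (m : ℝ) (L : ℕ) (z : ℕ → ℝ) : ℝ :=
  ∑ k ∈ range (L - 1), (z (k + 1) - z k) ^ (1 - m)

def seqPairSum (m : ℝ) (L : ℕ) (z : ℕ → ℝ) : ℝ :=
  ∑ i ∈ range L, ∑ j ∈ range L, if i ≠ j then |z i - z j| ^ (1 - m) else 0

lemma sub_pos_of_strictMonoOn (hz : StrictMonoOn z (Set.Iio L)) {k : ℕ} (hk : k + 1 < L) :
    0 < z (k + 1) - z k :=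
  sub_pos.2 (hz (show k < L by omega) hk k.lt_succ_self)

lemma seqGapSum_nonneg (hz : StrictMonoOn z (Set.Iio L)) : 0 ≤ seqGapSum m L z :=
  sum_nonneg fun k hk =>
    Real.rpow_nonneg (sub_pos_of_strictMonoOn hz (by have := mem_range.1 hk; omega)).le _

lemma seqPairSum_nonneg : 0 ≤ seqPairSum m L z :=
  sum_nonneg fun _ _ => sum_nonneg fun _ _ => by
    split_ifs
    · exact Real.rpow_nonneg (abs_nonneg _) _
    · exact le_rfl

lemma rpow_sub_le_seqGapSum (hz : StrictMonoOn z (Set.Iio L)) {k : ℕ} (hk : k + 1 < L) :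
    (z (k + 1) - z k) ^ (1 - m) ≤ seqGapSum m L z :=
  single_le_sum (f := fun k => (z (k + 1) - z k) ^ (1 - m))
    (fun j hj =>
      Real.rpow_nonneg (sub_pos_of_strictMonoOn hz (by have := mem_range.1 hj; omega)).le _)
    (mem_range.2 (by omega))

lemma seqGapSum_pos (hz : StrictMonoOn z (Set.Iio L)) (hL : 2 ≤ L) : 0 < seqGapSum m L z :=
  (Real.rpow_pos_of_pos (sub_pos_of_strictMonoOn hz (k := 0) (by omega)) _).trans_le
    (rpow_sub_le_seqGapSum hz (by omega))

lemma seqGapSum_eq_of_sub_const {c : ℝ} (h : ∀ k < L, w k = z k - c) :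
    seqGapSum m L w = seqGapSum m L z :=
  sum_congr rfl fun k hk => by
    have := mem_range.1 hk
    rw [h k (by omega), h (k + 1) (by omega), sub_sub_sub_cancel_right]

lemma seqPairSum_eq_of_sub_const {c : ℝ} (h : ∀ k < L, w k = z k - c) :
    seqPairSum m L w = seqPairSum m L z :=
  sum_congr rfl fun i hi => sum_congr rfl fun j hj => by
    rw [h i (mem_range.1 hi), h j (mem_range.1 hj), sub_sub_sub_cancel_right]

lemma seqPairSum_one : seqPairSum m 1 z = 0 := by
  simp [seqPairSum]

lemma seqPairSum_add (K R : ℕ) :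
    seqPairSum m (K + R) z = seqPairSum m K z + seqPairSum m R (fun j => z (K + j)) +
      2 * ∑ i ∈ range K, ∑ j ∈ range R, |z i - z (K + j)| ^ (1 - m) := by
  simp only [seqPairSum, sum_range_add, sum_add_distrib]
  rw [sum_comm (s := range R) (t := range K)]
  have hlr : ∀ i ∈ range K, ∀ j ∈ range R,
      (if i ≠ K + j then |z i - z (K + j)| ^ (1 - m) else 0) = |z i - z (K + j)| ^ (1 - m) :=
    fun i hi j _ => if_pos (by have := mem_range.1 hi; omega)
  have hrl : ∀ i ∈ range K, ∀ j ∈ range R,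
      (if K + j ≠ i then |z (K + j) - z i| ^ (1 - m) else 0) = |z i - z (K + j)| ^ (1 - m) :=
    fun i hi j _ => by rw [if_pos (by have := mem_range.1 hi; omega), abs_sub_comm]
  have hrr : ∀ i ∈ range R, ∀ j ∈ range R,
      (if K + i ≠ K + j then |z (K + i) - z (K + j)| ^ (1 - m) else 0) =
        if i ≠ j then |z (K + i) - z (K + j)| ^ (1 - m) else 0 :=
    fun i _ j _ => by simp only [ne_eq, Nat.add_left_cancel_iff]
  rw [sum_congr rfl fun i hi => sum_congr rfl (hlr i hi),
    sum_congr rfl fun i hi => sum_congr rfl (hrl i hi),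
    sum_congr rfl fun i hi => sum_congr rfl (hrr i hi)]
  ring

lemma seqGapSum_add_le (hz : StrictMonoOn z (Set.Iio (K + R))) :
    seqGapSum m K z + seqGapSum m R (fun j => z (K + j)) ≤ seqGapSum m (K + R) z := by
  rcases Nat.eq_zero_or_pos K with rfl | hK
  · simp [seqGapSum]
  rcases Nat.eq_zero_or_pos R with rfl | hR
  · simp [seqGapSum]
  have hlen : K + R - 1 = K + (R - 1) := by omega
  rw [seqGapSum, seqGapSum, seqGapSum, hlen, sum_range_add]
  gcongr ?_ + _
  refine sum_le_sum_of_subset_of_nonneg (range_mono (by omega)) fun k hk _ => ?_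
  exact Real.rpow_nonneg (sub_pos_of_strictMonoOn hz (by have := mem_range.1 hk; omega)).le _

lemma seqPairSum_le_mul_seqGapSum (hm : 1 < m) (hz : StrictMonoOn z (Set.Iio L)) :
    seqPairSum m L z ≤ 2 * ((L : ℝ) - 1) * seqGapSum m L z := by
  induction L with
  | zero => simp [seqPairSum, seqGapSum]
  | succ L ih =>
    have hzL : StrictMonoOn z (Set.Iio L) := hz.mono (Set.Iio_subset_Iio L.le_succ)
    rcases Nat.eq_zero_or_pos L with rfl | hL
    · simp [seqPairSum]
    obtain ⟨L, rfl⟩ : ∃ L', L = L' + 1 := ⟨L - 1, by omega⟩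
    set t := (z (L + 1) - z L) ^ (1 - m)
    have hG : seqGapSum m (L + 1 + 1) z = seqGapSum m (L + 1) z + t := by
      simp only [seqGapSum, Nat.add_sub_cancel, sum_range_succ, t]
    have hnew : ∀ i ∈ range (L + 1), |z i - z (L + 1)| ^ (1 - m) ≤ t := by
      intro i hi
      have hi : i ≤ L := Nat.lt_succ_iff.1 (mem_range.1 hi)
      have hzi : z i ≤ z L := hz.monotoneOn (by simp; omega) (by simp) hi
      have hgap := sub_pos_of_strictMonoOn hz (k := L) (by omega)
      rw [abs_sub_comm, abs_of_pos (by linarith)]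
      exact Real.rpow_le_rpow_of_nonpos hgap (by linarith) (by linarith)
    have hsum := sum_le_sum hnew
    rw [sum_const, card_range, nsmul_eq_mul] at hsum
    rw [seqPairSum_add (L + 1) 1, seqPairSum_one, hG]
    simp only [range_one, sum_singleton, add_zero]
    have hP := ih hzL
    have ht : 0 ≤ t := Real.rpow_nonneg (sub_pos_of_strictMonoOn hz (k := L) (by omega)).le _
    have hG0 := seqGapSum_nonneg (m := m) hzL
    push_cast at hP hsum ⊢
    nlinarith

end Sequences

section Configurations

variable {m : ℝ} {p : ℕ} {X : EuclideanSpace ℝ (Fin p)}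

def toSeq (X : EuclideanSpace ℝ (Fin p)) (n : ℕ) : ℝ :=
  if h : n < p then X ⟨n, h⟩ else 0

@[simp]
lemma toSeq_apply (X : EuclideanSpace ℝ (Fin p)) (i : Fin p) : toSeq X i = X i := by
  simp [toSeq]

lemma toSeq_of_lt (X : EuclideanSpace ℝ (Fin p)) {n : ℕ} (h : n < p) : toSeq X n = X ⟨n, h⟩ :=
  dif_pos h

lemma strictMonoOn_toSeq_iff : StrictMonoOn (toSeq X) (Set.Iio p) ↔ StrictMono fun i => X i := by
  constructor
  · intro h i j hij
    simpa using h (Set.mem_Iio.2 i.isLt) (Set.mem_Iio.2 j.isLt) (Fin.lt_def.1 hij)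
  · intro h i hi j hj hij
    rw [toSeq_of_lt X hi, toSeq_of_lt X hj]
    exact h (Fin.lt_def.2 hij)

lemma gapSum_eq_seqGapSum : gapSum m p X = seqGapSum m p (toSeq X) := by
  have hfilter : (range p).filter (· + 1 < p) = range (p - 1) := by
    ext k; simp only [mem_filter, mem_range]; omega
  rw [seqGapSum, ← hfilter, sum_filter, ← Fin.sum_univ_eq_sum_range
    (fun k => if k + 1 < p then (toSeq X (k + 1) - toSeq X k) ^ (1 - m) else 0)]
  refine sum_congr rfl fun i _ => ?_
  split_ifs with h
  · rw [toSeq_of_lt X h, toSeq_apply]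
  · rfl

lemma pairSum_eq_seqPairSum : pairSum m p X = seqPairSum m p (toSeq X) := by
  rw [seqPairSum, ← Fin.sum_univ_eq_sum_range]
  refine sum_congr rfl fun i _ => ?_
  rw [← Fin.sum_univ_eq_sum_range
    (fun j => if (i : ℕ) ≠ j then |toSeq X i - toSeq X j| ^ (1 - m) else 0)]
  simp [Fin.val_eq_val]

lemma gapSum_nonneg (hX : memR p X) : 0 ≤ gapSum m p X :=
  gapSum_eq_seqGapSum ▸ seqGapSum_nonneg (strictMonoOn_toSeq_iff.2 hX.1)

lemma gapSum_pos (hp : 2 ≤ p) (hX : memR p X) : 0 < gapSum m p X :=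
  gapSum_eq_seqGapSum ▸ seqGapSum_pos (strictMonoOn_toSeq_iff.2 hX.1) hp

lemma pairSum_nonneg : 0 ≤ pairSum m p X :=
  pairSum_eq_seqPairSum ▸ seqPairSum_nonneg

lemma pairSum_le_mul_gapSum (hm : 1 < m) (hX : memR p X) :
    pairSum m p X ≤ 2 * ((p : ℝ) - 1) * gapSum m p X := by
  rw [pairSum_eq_seqPairSum, gapSum_eq_seqGapSum]
  exact seqPairSum_le_mul_seqGapSum hm (strictMonoOn_toSeq_iff.2 hX.1)

lemma exists_memR_eq_sub_const {L : ℕ} {z : ℕ → ℝ} (hz : StrictMonoOn z (Set.Iio L)) :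
    ∃ X : EuclideanSpace ℝ (Fin L), memR L X ∧ ∃ c : ℝ, ∀ k < L, toSeq X k = z k - c := by
  set c := (∑ k ∈ range L, z k) / L
  refine ⟨WithLp.toLp 2 fun i => z i - c, ⟨fun i j hij => ?_, ?_⟩, c, fun k hk => ?_⟩
  · simpa using hz i.isLt j.isLt (Fin.lt_def.1 hij)
  · rcases Nat.eq_zero_or_pos L with rfl | hL
    · simp
    · simp only [sum_sub_distrib, Fin.sum_univ_eq_sum_range (fun k => z k), sum_const,
        card_univ, Fintype.card_fin, nsmul_eq_mul, c]
      field_simp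
      ring
  · simp [toSeq_of_lt _ hk]

lemma exists_memR (p : ℕ) : ∃ X : EuclideanSpace ℝ (Fin p), memR p X :=
  (exists_memR_eq_sub_const ((Nat.strictMono_cast (α := ℝ)).strictMonoOn (Set.Iio p))).imp
    fun _ h => h.1

lemma memR_smul {c : ℝ} (hc : 0 < c) (hX : memR p X) : memR p (c • X) :=
  ⟨fun i j hij => by simpa using mul_lt_mul_of_pos_left (hX.1 hij) hc,
    by simp [← mul_sum, hX.2]⟩

lemma gapSum_smul {c : ℝ} (hc : 0 < c) (hX : memR p X) :
    gapSum m p (c • X) = c ^ (1 - m) * gapSum m p X := by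
  rw [gapSum, gapSum, mul_sum]
  refine sum_congr rfl fun i _ => ?_
  split_ifs with h
  · have hlt : X i < X ⟨i + 1, h⟩ := hX.1 (Fin.lt_def.2 i.val.lt_succ_self)
    simp only [PiLp.smul_apply, smul_eq_mul, ← mul_sub]
    exact Real.mul_rpow hc.le (by linarith)
  · rw [mul_zero]

lemma pairSum_smul {c : ℝ} (hc : 0 < c) :
    pairSum m p (c • X) = c ^ (1 - m) * pairSum m p X := by
  simp only [pairSum, mul_sum]
  refine sum_congr rfl fun i _ => sum_congr rfl fun j _ => ?_
  split_ifs
  · simp only [PiLp.smul_apply, smul_eq_mul, ← mul_sub, abs_mul, abs_of_pos hc]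
    exact Real.mul_rpow hc.le (abs_nonneg _)
  · rw [mul_zero]

lemma norm_pos_of_memR (hp : 2 ≤ p) (hX : memR p X) : 0 < ‖X‖ :=
  norm_pos_iff.2 fun h0 => by
    simpa [h0] using hX.1 (show (⟨0, by omega⟩ : Fin p) < ⟨1, by omega⟩ from Fin.lt_def.2 one_pos)

end Configurations

section RatioSup

variable {m : ℝ} {p : ℕ} {X : EuclideanSpace ℝ (Fin p)}

def ratioSup (m : ℝ) (p : ℕ) : ℝ :=
  sSup {r : ℝ | ∃ X : EuclideanSpace ℝ (Fin p), memR p X ∧ r = pairSum m p X / gapSum m p X}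

lemma Cp_eq_inv_ratioSup (m : ℝ) (p : ℕ) : Cp m p = (ratioSup m p)⁻¹ := rfl

lemma bddAbove_ratio (hm : 1 < m) (p : ℕ) :
    BddAbove {r : ℝ | ∃ X : EuclideanSpace ℝ (Fin p), memR p X ∧
      r = pairSum m p X / gapSum m p X} := by
  refine ⟨2 * p, ?_⟩
  rintro _ ⟨X, hX, rfl⟩
  have hG := gapSum_nonneg (m := m) hX
  refine div_le_of_le_mul₀ hG (by positivity) ?_
  nlinarith [pairSum_le_mul_gapSum hm hX]

lemma div_le_ratioSup (hm : 1 < m) (hX : memR p X) :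
    pairSum m p X / gapSum m p X ≤ ratioSup m p :=
  le_csSup (bddAbove_ratio hm p) ⟨X, hX, rfl⟩

lemma ratioSup_nonneg (hm : 1 < m) (p : ℕ) : 0 ≤ ratioSup m p := by
  obtain ⟨X, hX⟩ := exists_memR p
  exact (div_nonneg pairSum_nonneg (gapSum_nonneg hX)).trans (div_le_ratioSup hm hX)

lemma ratioSup_le {a : ℝ} (ha : 0 ≤ a)
    (h : ∀ X : EuclideanSpace ℝ (Fin p), memR p X → pairSum m p X ≤ a * gapSum m p X) :
    ratioSup m p ≤ a := by
  obtain ⟨X, hX⟩ := exists_memR p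
  refine csSup_le ⟨_, X, hX, rfl⟩ ?_
  rintro _ ⟨Y, hY, rfl⟩
  exact div_le_of_le_mul₀ (gapSum_nonneg hY) ha (h Y hY)

lemma pairSum_le_ratioSup_mul (hm : 1 < m) (hX : memR p X) :
    pairSum m p X ≤ ratioSup m p * gapSum m p X := by
  rcases (gapSum_nonneg (m := m) hX).eq_or_lt with hG | hG
  · simpa [← hG] using pairSum_le_mul_gapSum hm hX
  · exact (div_le_iff₀ hG).1 (div_le_ratioSup hm hX)

lemma seqPairSum_le_ratioSup_mul (hm : 1 < m) {z : ℕ → ℝ} (hz : StrictMonoOn z (Set.Iio p)) :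
    seqPairSum m p z ≤ ratioSup m p * seqGapSum m p z := by
  obtain ⟨X, hX, c, hXz⟩ := exists_memR_eq_sub_const hz
  rw [← seqPairSum_eq_of_sub_const hXz, ← seqGapSum_eq_of_sub_const hXz,
    ← pairSum_eq_seqPairSum, ← gapSum_eq_seqGapSum]
  exact pairSum_le_ratioSup_mul hm hX

lemma ratioSup_le_two_mul (hm : 1 < m) (hp : 1 ≤ p) : ratioSup m p ≤ 2 * ((p : ℝ) - 1) :=
  ratioSup_le (mul_nonneg zero_le_two (sub_nonneg.2 (Nat.one_le_cast.2 hp)))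
    fun _ hX => pairSum_le_mul_gapSum hm hX

-- a new point placed at distance `g` to the right of a configuration of `p` points
lemma seqPairSum_add_le_ratioSup_succ_mul (hm : 1 < m) {z : ℕ → ℝ}
    (hz : StrictMonoOn z (Set.Iio p)) (hp : 1 ≤ p) {g : ℝ} (hg : 0 < g) :
    seqPairSum m p z + 2 * ∑ j ∈ range p, (z (p - 1) + g - z j) ^ (1 - m) ≤
      ratioSup m (p + 1) * (seqGapSum m p z + g ^ (1 - m)) := by
  set w := Function.update z p (z (p - 1) + g)
  have hwz : ∀ k < p, w k = z k - 0 := fun k hk => by simp [w, Function.update_of_ne hk.ne]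
  have hzle : ∀ j < p, z j ≤ z (p - 1) := fun j hj =>
    hz.monotoneOn (Set.mem_Iio.2 hj) (Set.mem_Iio.2 (by omega)) (by omega)
  have hw : StrictMonoOn w (Set.Iio (p + 1)) := by
    intro i hi j hj hij
    simp only [Set.mem_Iio] at hi hj
    rw [hwz i (by omega), sub_zero]
    rcases (Nat.lt_succ_iff.1 hj).lt_or_eq with hjp | rfl
    · rw [hwz j hjp, sub_zero]; exact hz (Set.mem_Iio.2 (by omega)) (Set.mem_Iio.2 hjp) hij
    · simp only [w, Function.update_self]; linarith [hzle i hij]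
  have hG : seqGapSum m (p + 1) w = seqGapSum m p z + g ^ (1 - m) := by
    obtain ⟨q, rfl⟩ : ∃ q, p = q + 1 := ⟨p - 1, by omega⟩
    rw [seqGapSum, Nat.add_sub_cancel, sum_range_succ, ← Nat.add_sub_cancel (n := q) (m := 1),
      ← seqGapSum, seqGapSum_eq_of_sub_const (fun k hk => hwz k (by omega))]
    simp [w]
  have hP : seqPairSum m (p + 1) w =
      seqPairSum m p z + 2 * ∑ j ∈ range p, (z (p - 1) + g - z j) ^ (1 - m) := by
    rw [seqPairSum_add p 1, seqPairSum_one, seqPairSum_eq_of_sub_const hwz, add_zero]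
    simp only [range_one, sum_singleton, add_zero]
    congr 2
    refine sum_congr rfl fun j hj => ?_
    have hj := mem_range.1 hj
    rw [hwz j hj, sub_zero, abs_sub_comm]
    simp only [w, Function.update_self]
    rw [abs_of_pos (by linarith [hzle j hj])]
  simpa [hG, hP] using seqPairSum_le_ratioSup_mul hm hw

lemma ratioSup_mono (hm : 1 < m) : Monotone (ratioSup m) := by
  refine monotone_nat_of_le_succ fun p => ratioSup_le (ratioSup_nonneg hm _) fun X hX => ?_
  rcases Nat.eq_zero_or_pos p with rfl | hp
  · simp [pairSum, gapSum]
  set z := toSeq X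
  have hz : StrictMonoOn z (Set.Iio p) := strictMonoOn_toSeq_iff.2 hX.1
  rw [pairSum_eq_seqPairSum, gapSum_eq_seqGapSum]
  have hzle : ∀ j < p, z j ≤ z (p - 1) := fun j hj =>
    hz.monotoneOn (Set.mem_Iio.2 hj) (Set.mem_Iio.2 (by omega)) (by omega)
  have hlim : Tendsto (fun g : ℝ => ratioSup m (p + 1) * (seqGapSum m p z + g ^ (1 - m))) atTop
      (𝓝 (ratioSup m (p + 1) * seqGapSum m p z)) := by
    have h := tendsto_rpow_neg_atTop (sub_pos.2 hm)
    rw [neg_sub] at h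
    simpa using (h.const_add (seqGapSum m p z)).const_mul (ratioSup m (p + 1))
  refine ge_of_tendsto hlim ((eventually_gt_atTop 0).mono fun g hg => ?_)
  refine le_trans ?_ (seqPairSum_add_le_ratioSup_succ_mul hm hz hp hg)
  have : 0 ≤ ∑ j ∈ range p, (z (p - 1) + g - z j) ^ (1 - m) := sum_nonneg fun j hj =>
    Real.rpow_nonneg (by linarith [hzle j (mem_range.1 hj)]) _
  linarith

lemma exists_mul_rpow_lt_mul_rpow_add {a b : ℝ} (hab : a < b) (r : ℝ) {D : ℝ} (hD : 0 ≤ D) :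
    ∃ g > 0, a * g ^ r < b * (g + D) ^ r := by
  have hlim : Tendsto (fun g : ℝ => b * (1 + D * g⁻¹) ^ r) atTop (𝓝 b) := by
    have h := ((tendsto_inv_atTop_zero.const_mul D).const_add 1).rpow_const (p := r)
      (Or.inl (by norm_num))
    simpa using h.const_mul b
  obtain ⟨g, hgab, hg⟩ := ((hlim.eventually (lt_mem_nhds hab)).and (eventually_gt_atTop 0)).exists
  refine ⟨g, hg, ?_⟩
  have hsplit : (g + D) ^ r = (1 + D * g⁻¹) ^ r * g ^ r := by
    rw [← Real.mul_rpow (by positivity) hg.le]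
    congr 1
    field_simp
  rw [hsplit, ← mul_assoc]
  exact mul_lt_mul_of_pos_right hgab (Real.rpow_pos_of_pos hg r)

lemma ratioSup_lt_succ (hm : 1 < m) (hp : 1 ≤ p) (hX : memR p X)
    (hXmax : pairSum m p X = ratioSup m p * gapSum m p X) :
    ratioSup m p < ratioSup m (p + 1) := by
  set z := toSeq X
  have hz : StrictMonoOn z (Set.Iio p) := strictMonoOn_toSeq_iff.2 hX.1
  have hzle : ∀ {i j}, i ≤ j → j < p → z i ≤ z j := fun hij hj =>
    hz.monotoneOn (Set.mem_Iio.2 (by omega)) (Set.mem_Iio.2 hj) hij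
  set D := z (p - 1) - z 0
  obtain ⟨g, hg, hgD⟩ := exists_mul_rpow_lt_mul_rpow_add
    (show 2 * ((p : ℝ) - 1) < 2 * p by linarith) (1 - m)
    (show 0 ≤ D from sub_nonneg.2 (hzle (Nat.zero_le _) (by omega)))
  set t := g ^ (1 - m)
  have ht : 0 < t := Real.rpow_pos_of_pos hg _
  -- each new interaction is at distance at most `g + D`
  have hδ : (p : ℝ) * (g + D) ^ (1 - m) ≤ ∑ j ∈ range p, (z (p - 1) + g - z j) ^ (1 - m) := by
    have h := card_nsmul_le_sum (range p) (fun j => (z (p - 1) + g - z j) ^ (1 - m))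
      ((g + D) ^ (1 - m)) fun j hj => by
        have hj := mem_range.1 hj
        exact Real.rpow_le_rpow_of_nonpos (by linarith [hzle (show j ≤ p - 1 by omega) (by omega)])
          (by linarith [hzle (Nat.zero_le j) hj]) (by linarith)
    simpa using h
  have hnew := seqPairSum_add_le_ratioSup_succ_mul hm hz hp hg
  rw [← pairSum_eq_seqPairSum, ← gapSum_eq_seqGapSum] at hnew
  have hσ := ratioSup_le_two_mul hm hp (m := m)
  have hGt : 0 < gapSum m p X + t := by linarith [gapSum_nonneg (m := m) hX]
  refine lt_of_mul_lt_mul_right ?_ hGt.le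
  calc ratioSup m p * (gapSum m p X + t) = pairSum m p X + ratioSup m p * t := by
        rw [hXmax]; ring
    _ ≤ pairSum m p X + 2 * ((p : ℝ) - 1) * t := by gcongr
    _ < pairSum m p X + 2 * p * (g + D) ^ (1 - m) := by linarith
    _ ≤ _ := by linarith

end RatioSup

section Collisions

variable {m : ℝ} {p : ℕ}

lemma seqPairSum_le_ratioSup_mul_add (hm : 1 < m) {K R q : ℕ} {z : ℕ → ℝ}
    (hz : StrictMonoOn z (Set.Iio (K + R))) (hK : K ≤ q) (hR : R ≤ q) :
    seqPairSum m (K + R) z ≤ ratioSup m q * seqGapSum m (K + R) z +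
      2 * ∑ i ∈ range K, ∑ j ∈ range R, |z i - z (K + j)| ^ (1 - m) := by
  have hzK : StrictMonoOn z (Set.Iio K) := hz.mono (Set.Iio_subset_Iio (by omega))
  have hzR : StrictMonoOn (fun j => z (K + j)) (Set.Iio R) := fun i hi j hj hij =>
    hz (Set.mem_Iio.2 (by simp at hi; omega)) (Set.mem_Iio.2 (by simp at hj; omega)) (by omega)
  have hleft := (seqPairSum_le_ratioSup_mul (m := m) hm hzK).trans
    (mul_le_mul_of_nonneg_right (ratioSup_mono hm hK) (seqGapSum_nonneg hzK))
  have hright := (seqPairSum_le_ratioSup_mul (m := m) hm hzR).trans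
    (mul_le_mul_of_nonneg_right (ratioSup_mono hm hR) (seqGapSum_nonneg hzR))
  have hG := mul_le_mul_of_nonneg_left (seqGapSum_add_le (m := m) hz) (ratioSup_nonneg hm q)
  rw [seqPairSum_add]
  linarith

-- Cutting at a jump of the limit configuration leaves two blocks of at most `p - 1` points
-- and a bounded interaction between them, while the gap sum blows up at the collision.
theorem tendsto_mul_seqGapSum_sub_seqPairSum_atTop (hm : 1 < m) {z : ℕ → ℕ → ℝ} {w : ℕ → ℝ}
    (hz : ∀ n, StrictMonoOn (z n) (Set.Iio p))
    (hzw : ∀ i, Tendsto (fun n => z n i) atTop (𝓝 (w i)))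
    (hcoll : ¬ StrictMonoOn w (Set.Iio p)) (hw : w 0 < w (p - 1)) {a : ℝ}
    (ha : ratioSup m (p - 1) < a) :
    Tendsto (fun n => a * seqGapSum m p (z n) - seqPairSum m p (z n)) atTop atTop := by
  have hp : 2 ≤ p := by by_contra! h; interval_cases p <;> simp at hw
  have hwle : ∀ {i j}, i ≤ j → j < p → w i ≤ w j := fun hij hj =>
    le_of_tendsto_of_tendsto' (hzw _) (hzw _) fun n =>
      (hz n).monotoneOn (Set.mem_Iio.2 (by omega)) (Set.mem_Iio.2 hj) hij
  obtain ⟨k, hk, hwk⟩ : ∃ k, k + 1 < p ∧ w (k + 1) ≤ w k := by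
    by_contra! h
    refine hcoll ?_
    have hIic : Set.Iio p = Set.Iic (p - 1) := by ext; simp; omega
    rw [hIic]
    exact strictMonoOn_Iic_of_lt_succ fun k hk => by
      simpa [Order.succ_eq_add_one] using h k (by omega)
  have hG : Tendsto (fun n => seqGapSum m p (z n)) atTop atTop := by
    have hgap : Tendsto (fun n => z n (k + 1) - z n k) atTop (𝓝[>] 0) := by
      refine tendsto_nhdsWithin_iff.2
        ⟨?_, Eventually.of_forall fun n => sub_pos_of_strictMonoOn (hz n) hk⟩
      have h := (hzw (k + 1)).sub (hzw k)
      rwa [le_antisymm (sub_nonpos.2 hwk) (sub_nonneg.2 (hwle k.le_succ hk))] at h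
    exact tendsto_atTop_mono (fun n => rpow_sub_le_seqGapSum (hz n) hk)
      ((tendsto_rpow_neg_nhdsGT_zero (by linarith)).comp hgap)
  obtain ⟨K, hK, hjump⟩ : ∃ K ∈ range (p - 1), (0 : ℝ) < w (K + 1) - w K := by
    refine exists_lt_of_sum_lt ?_
    rw [sum_const_zero, sum_range_sub]
    linarith
  have hK := mem_range.1 hK
  obtain ⟨R, rfl⟩ : ∃ R, p = K + 1 + R := ⟨p - (K + 1), by omega⟩
  set cross := fun (v : ℕ → ℝ) => ∑ i ∈ range (K + 1), ∑ j ∈ range R, |v i - v (K + 1 + j)| ^ (1 - m)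
  have hcross : Tendsto (fun n => cross (z n)) atTop (𝓝 (cross w)) := by
    refine tendsto_finsetSum _ fun i hi => tendsto_finsetSum _ fun j hj => ?_
    have hi := mem_range.1 hi
    have hj := mem_range.1 hj
    have hne : w i - w (K + 1 + j) ≠ 0 := by
      linarith [hwle (show i ≤ K by omega) (by omega), hwle (show K + 1 ≤ K + 1 + j by omega) (by omega)]
    exact (((hzw i).sub (hzw (K + 1 + j))).abs).rpow_const (Or.inl (abs_ne_zero.2 hne))
  have hbound : ∀ n, (a - ratioSup m (K + 1 + R - 1)) * seqGapSum m (K + 1 + R) (z n) +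
      -(2 * cross (z n)) ≤ a * seqGapSum m (K + 1 + R) (z n) - seqPairSum m (K + 1 + R) (z n) := by
    intro n
    have := seqPairSum_le_ratioSup_mul_add (q := K + 1 + R - 1) hm (hz n) (by omega) (by omega)
    linarith
  exact tendsto_atTop_mono hbound
    ((hG.const_mul_atTop (sub_pos.2 ha)).atTop_add (hcross.const_mul 2).neg)

lemma tendsto_toSeq {x : ℕ → EuclideanSpace ℝ (Fin p)} {y : EuclideanSpace ℝ (Fin p)}
    (hxy : Tendsto x atTop (𝓝 y)) (i : ℕ) :
    Tendsto (fun n => toSeq (x n) i) atTop (𝓝 (toSeq y i)) := by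
  by_cases hi : i < p
  · simp only [toSeq_of_lt _ hi]
    exact ((EuclideanSpace.proj _).continuous.tendsto y).comp hxy
  · simp only [toSeq, dif_neg hi]
    exact tendsto_const_nhds

lemma monotone_of_tendsto {x : ℕ → EuclideanSpace ℝ (Fin p)} {y : EuclideanSpace ℝ (Fin p)}
    (hx : ∀ n, memR p (x n)) (hxy : Tendsto x atTop (𝓝 y)) : Monotone fun i => y i :=
  fun i j hij => by
    simpa using le_of_tendsto_of_tendsto' (tendsto_toSeq hxy i) (tendsto_toSeq hxy j)
      fun n => by simpa using (hx n).1.monotone hij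

lemma sum_eq_zero_of_tendsto {x : ℕ → EuclideanSpace ℝ (Fin p)} {y : EuclideanSpace ℝ (Fin p)}
    (hx : ∀ n, memR p (x n)) (hxy : Tendsto x atTop (𝓝 y)) : ∑ i, y i = 0 := by
  have h := tendsto_finsetSum univ fun (i : Fin p) _ => tendsto_toSeq hxy i
  simp only [toSeq_apply, (hx _).2] at h
  exact tendsto_nhds_unique h tendsto_const_nhds

lemma toSeq_zero_lt_toSeq_last {y : EuclideanSpace ℝ (Fin p)} (hmono : Monotone fun i => y i)
    (hsum : ∑ i, y i = 0) (hy : y ≠ 0) : toSeq y 0 < toSeq y (p - 1) := by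
  rcases Nat.eq_zero_or_pos p with rfl | hp
  · exact absurd (Subsingleton.elim y 0) hy
  by_contra! hle
  have hconst : ∀ i : Fin p, y i = y ⟨0, hp⟩ := fun i => by
    rw [toSeq_of_lt y hp, toSeq_of_lt y (by omega)] at hle
    exact le_antisymm ((hmono (Fin.le_def.2 (by omega : i.val ≤ p - 1))).trans hle)
      (hmono (Fin.le_def.2 (Nat.zero_le _)))
  have h0 : y ⟨0, hp⟩ = 0 := by
    simp only [hconst, sum_const, card_univ, Fintype.card_fin, nsmul_eq_mul] at hsum
    exact (mul_eq_zero.1 hsum).resolve_left (by positivity)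
  exact hy (by ext i; simp [hconst i, h0])

theorem tendsto_mul_gapSum_sub_pairSum_atTop (hm : 1 < m) {x : ℕ → EuclideanSpace ℝ (Fin p)}
    {y : EuclideanSpace ℝ (Fin p)} (hx : ∀ n, memR p (x n)) (hxy : Tendsto x atTop (𝓝 y))
    (hcoll : ¬ StrictMono fun i => y i) (hy : y ≠ 0) {a : ℝ} (ha : ratioSup m (p - 1) < a) :
    Tendsto (fun n => a * gapSum m p (x n) - pairSum m p (x n)) atTop atTop := by
  simp only [gapSum_eq_seqGapSum, pairSum_eq_seqPairSum]
  exact tendsto_mul_seqGapSum_sub_seqPairSum_atTop hm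
    (fun n => strictMonoOn_toSeq_iff.2 (hx n).1) (tendsto_toSeq hxy)
    (mt strictMonoOn_toSeq_iff.1 hcoll)
    (toSeq_zero_lt_toSeq_last (monotone_of_tendsto hx hxy) (sum_eq_zero_of_tendsto hx hxy) hy) ha

end Collisions

section Smoothness

variable {m χ : ℝ} {p : ℕ} {X : EuclideanSpace ℝ (Fin p)}

lemma differentiableAt_gapSum (hX : StrictMono fun i => X i) :
    DifferentiableAt ℝ (gapSum m p) X := by
  unfold gapSum
  refine DifferentiableAt.fun_sum fun i _ => ?_
  split_ifs with h
  · have hne : X ⟨i + 1, h⟩ - X i ≠ 0 :=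
      sub_ne_zero.2 (hX (Fin.lt_def.2 i.val.lt_succ_self)).ne'
    exact DifferentiableAt.rpow_const (by fun_prop) (Or.inl hne)
  · exact differentiableAt_const 0

lemma differentiableAt_pairSum (hX : StrictMono fun i => X i) :
    DifferentiableAt ℝ (pairSum m p) X := by
  unfold pairSum
  refine DifferentiableAt.fun_sum fun i _ => DifferentiableAt.fun_sum fun j _ => ?_
  split_ifs with h
  · have hne : X i - X j ≠ 0 := sub_ne_zero.2 (hX.injective.ne h)
    exact DifferentiableAt.rpow_const (DifferentiableAt.abs (by fun_prop) hne)
      (Or.inl (abs_ne_zero.2 hne))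
  · exact differentiableAt_const 0

lemma differentiableAt_FF (hX : StrictMono fun i => X i) : DifferentiableAt ℝ (FF m χ p) X :=
  ((differentiableAt_gapSum hX).const_mul _).sub ((differentiableAt_pairSum hX).const_mul _)

end Smoothness

section Extremal

variable {m : ℝ} {p : ℕ}

-- A maximising sequence, normalised to the unit sphere, converges to a maximiser:
-- a collision in the limit would keep the ratio below any `a > ratioSup m (p - 1)`.
theorem exists_pairSum_eq_ratioSup_mul (hm : 1 < m) (hp : 2 ≤ p)
    (hlt : ratioSup m (p - 1) < ratioSup m p) :
    ∃ X : EuclideanSpace ℝ (Fin p), memR p X ∧ pairSum m p X = ratioSup m p * gapSum m p X := by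
  obtain ⟨X₀, hX₀⟩ := exists_memR p
  obtain ⟨u, -, hu, hmem⟩ := exists_seq_tendsto_sSup (by exact ⟨_, X₀, hX₀, rfl⟩) (bddAbove_ratio hm p)
  choose x hx hux using hmem
  have hxpos : ∀ n, 0 < ‖x n‖ := fun n => norm_pos_of_memR hp (hx n)
  set v := fun n => ‖x n‖⁻¹ • x n
  have hv : ∀ n, memR p (v n) := fun n => memR_smul (inv_pos.2 (hxpos n)) (hx n)
  have hvu : ∀ n, pairSum m p (v n) / gapSum m p (v n) = u n := fun n => by
    rw [hux n, pairSum_smul (inv_pos.2 (hxpos n)), gapSum_smul (inv_pos.2 (hxpos n)) (hx n),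
      mul_div_mul_left _ _ (Real.rpow_pos_of_pos (inv_pos.2 (hxpos n)) _).ne']
  have hvs : ∀ n, v n ∈ Metric.sphere (0 : EuclideanSpace ℝ (Fin p)) 1 := fun n => by
    simp [v, norm_smul, (hxpos n).ne']
  obtain ⟨y, hy1, φ, hφ, hlim⟩ := (isCompact_sphere _ _).tendsto_subseq hvs
  have hy0 : y ≠ 0 := fun h => by simp [h] at hy1
  have hratio : Tendsto (fun n => pairSum m p (v (φ n)) / gapSum m p (v (φ n))) atTop
      (𝓝 (ratioSup m p)) :=
    (hu.comp hφ.tendsto_atTop).congr fun n => (hvu (φ n)).symm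
  by_cases hy : StrictMono fun i => y i
  · have hyR : memR p y := ⟨hy, sum_eq_zero_of_tendsto (fun n => hv (φ n)) hlim⟩
    have hG := gapSum_pos (m := m) hp hyR
    have hlim' := ((differentiableAt_pairSum (m := m) hy).continuousAt.tendsto.comp hlim).div
      ((differentiableAt_gapSum hy).continuousAt.tendsto.comp hlim) hG.ne'
    refine ⟨y, hyR, ?_⟩
    rw [← tendsto_nhds_unique hlim' hratio, div_mul_cancel₀ _ hG.ne']
  · exfalso
    obtain ⟨a, hpa, hap⟩ := exists_between hlt
    have hcoll := tendsto_mul_gapSum_sub_pairSum_atTop hm (fun n => hv (φ n)) hlim hy hy0 hpa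
    have hle : ratioSup m p ≤ a := le_of_tendsto hratio <|
      (hcoll.eventually_gt_atTop 0).mono fun n hn =>
        (div_le_iff₀ (gapSum_pos hp (hv (φ n)))).2 (by linarith)
    linarith

theorem ratioSup_pred_lt (hm : 1 < m) (hp : 2 ≤ p) : ratioSup m (p - 1) < ratioSup m p := by
  induction p, hp using Nat.le_induction with
  | base =>
    obtain ⟨X, hX⟩ := exists_memR 1
    exact ratioSup_lt_succ hm le_rfl hX (by simp [pairSum, gapSum])
  | succ p hp ih =>
    obtain ⟨X, hX, hXmax⟩ := exists_pairSum_eq_ratioSup_mul hm hp ih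
    simpa using ratioSup_lt_succ hm (by omega) hX hXmax

end Extremal

section GapBound

variable {m χ : ℝ} {N : ℕ}

lemma gapAt_eq_toSeq_sub (Y : EuclideanSpace ℝ (Fin N)) {i : ℕ} (hi : i + 1 < N) :
    gapAt N Y i = toSeq Y (i + 1) - toSeq Y i := by
  rw [gapAt, dif_pos hi, toSeq_of_lt Y hi, toSeq_of_lt Y (by omega)]

-- Along a sequence with shrinking gaps, a limit point without collision is impossible, and a
-- limit point with a collision makes `FF` blow up, since `χ⁻¹ > ratioSup m (N - 1)`.
theorem exists_le_gapAt_of_FF_le (hm : 1 < m) (hN : 2 ≤ N) (hχ : 0 < χ)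
    (hχN : χ * ratioSup m (N - 1) < 1) {ρ : ℝ} (hρ : 0 < ρ) (R B : ℝ) :
    ∃ ε > 0, ∀ X : EuclideanSpace ℝ (Fin N), memR N X → ρ ≤ ‖X‖ → ‖X‖ ≤ R →
      FF m χ N X ≤ B → ∀ i, i + 1 < N → ε ≤ gapAt N X i := by
  by_contra! h
  choose x hx hρx hRx hB i hi hgap using fun n : ℕ => h (1 / (n + 1)) Nat.one_div_pos_of_nat
  obtain ⟨y, -, φ, hφ, hlim⟩ := (isCompact_closedBall (0 : EuclideanSpace ℝ (Fin N)) R).tendsto_subseq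
    fun n => mem_closedBall_zero_iff.2 (hRx n)
  by_cases hy : StrictMono fun i => y i
  · have hev : ∀ᶠ n in atTop, ∀ j ∈ range (N - 1), 1 / ((φ n : ℝ) + 1) < gapAt N (x (φ n)) j := by
      refine (eventually_all_finset _).2 fun j hj => ?_
      have hj : j + 1 < N := by have := mem_range.1 hj; omega
      have hpos := sub_pos_of_strictMonoOn (strictMonoOn_toSeq_iff.2 hy) hj
      have hlimj := ((tendsto_toSeq hlim (j + 1)).sub (tendsto_toSeq hlim j)).sub
        (tendsto_one_div_add_atTop_nhds_zero_nat.comp hφ.tendsto_atTop)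
      rw [sub_zero] at hlimj
      refine (hlimj.eventually (lt_mem_nhds hpos)).mono fun n hn => ?_
      simp only [Function.comp, sub_pos] at hn
      rwa [gapAt_eq_toSeq_sub _ hj]
    obtain ⟨n, hn⟩ := hev.exists
    exact (hgap (φ n)).not_gt (hn _ (mem_range.2 (by have := hi (φ n); omega)))
  · have hy0 : y ≠ 0 := by
      have := ge_of_tendsto ((continuous_norm.tendsto y).comp hlim)
        (Eventually.of_forall fun n => hρx (φ n))
      exact norm_pos_iff.1 (hρ.trans_le this)
    have ha : ratioSup m (N - 1) < χ⁻¹ :=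
      ((lt_inv_mul_iff₀ hχ).2 (by simpa using hχN)).trans_eq (mul_one _)
    have hF : Tendsto (fun n => FF m χ N (x (φ n))) atTop atTop := by
      refine ((tendsto_mul_gapSum_sub_pairSum_atTop hm (fun n => hx (φ n)) hlim hy hy0 ha).const_mul_atTop
        (show 0 < χ / (m - 1) by have := sub_pos.2 hm; positivity)).congr fun n => ?_
      simp only [FF]
      field_simp
    obtain ⟨n, hn⟩ := (hF.eventually_gt_atTop B).exists
    exact hn.not_ge (hB (φ n))

end GapBound

section Energy

open scoped RealInnerProductSpace

variable {m χ : ℝ} {p : ℕ} {X : EuclideanSpace ℝ (Fin p)}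

lemma FF_Cp_nonneg (hm : 1 < m) (hX : memR p X) : 0 ≤ FF m (Cp m p) p X := by
  set σ := ratioSup m p
  have hP : σ⁻¹ * pairSum m p X ≤ gapSum m p X := by
    rcases eq_or_ne σ 0 with hσ | hσ
    · simpa [hσ] using gapSum_nonneg hX
    · calc σ⁻¹ * pairSum m p X ≤ σ⁻¹ * (σ * gapSum m p X) :=
            mul_le_mul_of_nonneg_left (pairSum_le_ratioSup_mul hm hX)
              (inv_nonneg.2 (ratioSup_nonneg hm p))
        _ = gapSum m p X := inv_mul_cancel_left₀ hσ _
  have hFF : FF m (Cp m p) p X = (m - 1)⁻¹ * (gapSum m p X - σ⁻¹ * pairSum m p X) := by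
    rw [FF, Cp_eq_inv_ratioSup]; ring
  rw [hFF]
  exact mul_nonneg (inv_nonneg.2 (by linarith)) (by linarith)

lemma FF_smul (hX : memR p X) {c : ℝ} (hc : 0 < c) :
    FF m χ p (c • X) = c ^ (1 - m) * FF m χ p X := by
  rw [FF, FF, gapSum_smul hc hX, pairSum_smul hc]
  ring

-- Euler's identity for the `(1 - m)`-homogeneous function `FF`
lemma inner_gradient_FF_self (hX : memR p X) :
    ⟪gradient (FF m χ p) X, X⟫ = (1 - m) * FF m χ p X := by
  have hFX : HasFDerivAt (FF m χ p) (InnerProductSpace.toDual ℝ _ (gradient (FF m χ p) X))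
      ((fun c : ℝ => c • X) 1) := by
    simpa using (differentiableAt_FF hX.1).hasGradientAt.hasFDerivAt
  have hray := hFX.comp_hasDerivAt 1 ((hasDerivAt_id (1 : ℝ)).smul_const X)
  have hhom : HasDerivAt (fun c : ℝ => FF m χ p (c • X)) ((1 - m) * FF m χ p X) 1 := by
    have h := (Real.hasDerivAt_rpow_const (x := 1) (p := 1 - m) (Or.inl one_ne_zero)).mul_const
      (FF m χ p X)
    simp only [Real.one_rpow, mul_one] at h
    refine h.congr_of_eventuallyEq ?_
    filter_upwards [eventually_gt_nhds one_pos] with c hc using FF_smul hX hc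
  simpa using hray.unique hhom

end Energy

section GradientFlow

open scoped RealInnerProductSpace

variable {m χ T : ℝ} {N : ℕ} {X : ℝ → EuclideanSpace ℝ (Fin N)}

lemma Convex.monotoneOn_of_hasDerivWithinAt_nonneg {s : Set ℝ} (hs : Convex ℝ s)
    {f f' : ℝ → ℝ} (hf : ∀ t ∈ s, HasDerivWithinAt f (f' t) s t) (hf' : ∀ t ∈ s, 0 ≤ f' t) :
    MonotoneOn f s :=
  _root_.monotoneOn_of_hasDerivWithinAt_nonneg hs (fun t ht => (hf t ht).continuousWithinAt)
    (fun t ht => (hf t (interior_subset ht)).mono interior_subset)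
    fun t ht => hf' t (interior_subset ht)

lemma isGFlow.antitoneOn_FF (hflow : isGFlow m χ N T X) :
    AntitoneOn (fun t => FF m χ N (X t)) (Set.Ico 0 T) := by
  have hd : ∀ t ∈ Set.Ico 0 T, HasDerivWithinAt (fun t => -FF m χ N (X t))
      (‖gradient (FF m χ N) (X t)‖ ^ 2) (Set.Ico 0 T) t := fun t ht => by
    have h := (differentiableAt_FF (m := m) (χ := χ) (hflow t ht).1.1).hasGradientAt.hasFDerivAt.comp_hasDerivWithinAt
      t (hflow t ht).2
    rw [InnerProductSpace.toDual_apply_apply, inner_neg_right, real_inner_self_eq_norm_sq] at h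
    have h' := h.neg
    rw [neg_neg] at h'
    exact h'
  exact fun a ha b hb hab => neg_le_neg_iff.1 <|
    (convex_Ico 0 T).monotoneOn_of_hasDerivWithinAt_nonneg hd (fun _ _ => sq_nonneg _) ha hb hab

lemma isGFlow.hasDerivWithinAt_norm_sq (hflow : isGFlow m χ N T X) {t : ℝ}
    (ht : t ∈ Set.Ico 0 T) :
    HasDerivWithinAt (fun t => ‖X t‖ ^ 2) (2 * (m - 1) * FF m χ N (X t)) (Set.Ico 0 T) t := by
  have h := (hflow t ht).2.norm_sq
  rw [inner_neg_right, real_inner_comm, inner_gradient_FF_self (hflow t ht).1] at h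
  convert h using 1
  ring

lemma isGFlow.norm_le_norm (hm : 1 < m) (hflow : isGFlow m χ N T X)
    (hF : ∀ t ∈ Set.Ico 0 T, 0 ≤ FF m χ N (X t)) {s t : ℝ} (hs : s ∈ Set.Ico 0 T) (ht : t ∈ Set.Ico 0 T)
    (hst : s ≤ t) : ‖X s‖ ≤ ‖X t‖ := by
  have hmono := (convex_Ico 0 T).monotoneOn_of_hasDerivWithinAt_nonneg
    (fun t ht => hflow.hasDerivWithinAt_norm_sq ht)
    fun t ht => mul_nonneg (by linarith) (hF t ht)
  exact (pow_le_pow_iff_left₀ (norm_nonneg _) (norm_nonneg _) two_ne_zero).1 (hmono hs ht hst)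

lemma isGFlow.norm_sq_le (hm : 1 < m) (hflow : isGFlow m χ N T X)
    (hF : ∀ t ∈ Set.Ico 0 T, 0 ≤ FF m χ N (X t)) (h0 : 0 ∈ Set.Ico 0 T) {t : ℝ} (ht : t ∈ Set.Ico 0 T) :
    ‖X t‖ ^ 2 ≤ ‖X 0‖ ^ 2 + 2 * (m - 1) * FF m χ N (X 0) * T := by
  have hC : 0 ≤ 2 * (m - 1) * FF m χ N (X 0) := mul_nonneg (by linarith) (hF 0 h0)
  have h := (convex_Ico 0 T).norm_image_sub_le_of_norm_hasDerivWithin_le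
    (C := 2 * (m - 1) * FF m χ N (X 0)) (fun t ht => hflow.hasDerivWithinAt_norm_sq ht) (fun s hs => ?_) h0 ht
  · rw [Real.norm_eq_abs, Real.norm_eq_abs, sub_zero, abs_of_nonneg ht.1] at h
    nlinarith [le_abs_self (‖X t‖ ^ 2 - ‖X 0‖ ^ 2), ht.2.le]
  · rw [Real.norm_eq_abs, abs_of_nonneg (mul_nonneg (by linarith) (hF s hs))]
    have := hflow.antitoneOn_FF h0 hs hs.1
    nlinarith

end GradientFlow

theorem stmt18_general (N : ℕ) (hN : 2 ≤ N) (m χ : ℝ) (hm : 1 < m)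
    (hcrit : χ = Cp m N) (T : ℝ) (hT : 0 < T) (X : ℝ → EuclideanSpace ℝ (Fin N))
    (hflow : isGFlow m χ N T X) :
    ∃ ε : ℝ, 0 < ε ∧ ∀ t ∈ Set.Ico (0 : ℝ) T, ∀ i : ℕ, i + 1 < N →
      ε ≤ gapAt N (X t) i := by
  subst hcrit
  have hσ := ratioSup_pred_lt hm hN
  have hσpos : 0 < ratioSup m N := (ratioSup_nonneg hm _).trans_lt hσ
  have hχN : Cp m N * ratioSup m (N - 1) < 1 := by
    rwa [Cp_eq_inv_ratioSup, inv_mul_lt_iff₀ hσpos, mul_one]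
  have hF : ∀ t ∈ Set.Ico 0 T, 0 ≤ FF m (Cp m N) N (X t) := fun t ht =>
    FF_Cp_nonneg hm (hflow t ht).1
  have h0 : (0 : ℝ) ∈ Set.Ico 0 T := ⟨le_rfl, hT⟩
  obtain ⟨ε, hε, hgap⟩ := exists_le_gapAt_of_FF_le hm hN (inv_pos.2 hσpos) hχN
    (norm_pos_of_memR hN (hflow 0 h0).1)
    √(‖X 0‖ ^ 2 + 2 * (m - 1) * FF m (Cp m N) N (X 0) * T) (FF m (Cp m N) N (X 0))
  exact ⟨ε, hε, fun t ht => hgap (X t) (hflow t ht).1 (hflow.norm_le_norm hm hF h0 ht ht.1)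
    (Real.le_sqrt_of_sq_le (hflow.norm_sq_le hm hF h0 ht)) (hflow.antitoneOn_FF h0 ht ht.1)⟩

theorem stmt18 (N : ℕ) (hN : 2 ≤ N) (m χ : ℝ) (hm : 1 < m) (hχ : 0 < χ)
    (hcrit : χ = Cp m N) (T : ℝ) (hT : 0 < T) (X : ℝ → EuclideanSpace ℝ (Fin N))
    (hflow : isGFlow m χ N T X) :
    ∃ ε : ℝ, 0 < ε ∧ ∀ t ∈ Set.Ico (0 : ℝ) T, ∀ i : ℕ, i + 1 < N →
      ε ≤ gapAt N (X t) i :=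
  stmt18_general N hN m χ hm hcrit T hT X hflow
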